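/- For the quantile representation of a distribution by N equally weighted particles, the 1-Wasserstein distance between the empirical measure (1/N)Σ_{i=1}^N δ_{x_i} and (1/N)Σ_{i=1}^N δ_{y_i}, where x_1 ≤ ... ≤ x_N and y_1 ≤ ... ≤ y_N, equals (1/N)Σ_{i=1}^N |x_i − y_i|. -/

import Mathlib

open MeasureTheory Finset

/-- Generalized inverse CDF (quantile function) of a measure on `ℝ`. -/
noncomputable def quantile (μ : Measure ℝ) (ω : ℝ) : ℝ :=
  sInf {x : ℝ | ω ≤ ProbabilityTheory.cdf μ x}

/-- `1`-Wasserstein distance on measures on `ℝ`, via the quantile-function formula. -/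
noncomputable def W1 (μ ν : Measure ℝ) : ℝ :=
  ∫ ω in Set.Ioo (0:ℝ) 1, |quantile μ ω - quantile ν ω|

/-
The quantile function of `(1/N) Σ δ_{x_i}` with `x` sorted is the step function equal to `x i`
on `(i/N, (i+1)/N]`. Hence the integrand of `W1` is the constant `|x i - y i|` on each of these
intervals of length `1/N`, and the integral over `(0, 1)` is the average of these constants.
-/

noncomputable def empiricalMeasure {N : ℕ} (x : Fin N → ℝ) : Measure ℝ :=
  ∑ i, ((N : ENNReal))⁻¹ • Measure.dirac (x i)

theorem isProbabilityMeasure_empiricalMeasure {N : ℕ} (hN : 0 < N) (x : Fin N → ℝ) :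
    IsProbabilityMeasure (empiricalMeasure x) := by
  constructor
  simp only [empiricalMeasure, Measure.finsetSum_apply, Measure.smul_apply, smul_eq_mul,
    measure_univ, mul_one, sum_const, card_univ, Fintype.card_fin, nsmul_eq_mul]
  exact ENNReal.mul_inv_cancel (by exact_mod_cast hN.ne') (ENNReal.natCast_ne_top N)

theorem cdf_empiricalMeasure {N : ℕ} (hN : 0 < N) (x : Fin N → ℝ) (t : ℝ) :
    ProbabilityTheory.cdf (empiricalMeasure x) t = #{j | x j ≤ t} / N := by
  have := isProbabilityMeasure_empiricalMeasure hN x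
  rw [ProbabilityTheory.cdf_eq_real, measureReal_def, empiricalMeasure, Measure.finsetSum_apply]
  simp only [Measure.smul_apply, smul_eq_mul, Measure.dirac_apply' _ measurableSet_Iic,
    Set.indicator_apply, Set.mem_Iic, Pi.one_apply, mul_ite, mul_one, mul_zero, sum_ite,
    sum_const_zero, add_zero, sum_const, nsmul_eq_mul]
  rw [ENNReal.toReal_mul, ENNReal.toReal_inv]
  simp only [ENNReal.toReal_natCast]
  ring

theorem Monotone.succ_le_card_filter_le {N : ℕ} {x : Fin N → ℝ} (hx : Monotone x) (i : Fin N) :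
    (i : ℕ) + 1 ≤ #{j | x j ≤ x i} := by
  rw [← Fin.card_Iic]
  exact card_le_card fun j hj => mem_filter.2 ⟨mem_univ j, hx (mem_Iic.1 hj)⟩

theorem Monotone.card_filter_le_le {N : ℕ} {x : Fin N → ℝ} (hx : Monotone x) {i : Fin N} {t : ℝ}
    (ht : t < x i) : #{j | x j ≤ t} ≤ (i : ℕ) := by
  rw [← Fin.card_Iio]
  refine card_le_card fun j hj => mem_Iio.2 ?_
  by_contra! hij
  exact (ht.trans_le (hx hij)).not_ge (mem_filter.1 hj).2

theorem quantile_empiricalMeasure {N : ℕ} (hN : 0 < N) {x : Fin N → ℝ} (hx : Monotone x)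
    (i : Fin N) {ω : ℝ} (hω : ω ∈ Set.Ioc ((i : ℝ) / N) (((i : ℝ) + 1) / N)) :
    quantile (empiricalMeasure x) ω = x i := by
  have hNR : (0 : ℝ) < N := by exact_mod_cast hN
  refine IsLeast.csInf_eq ⟨?_, fun t ht => ?_⟩
  · rw [Set.mem_ofPred_eq, cdf_empiricalMeasure hN]
    refine hω.2.trans (div_le_div_of_nonneg_right ?_ hNR.le)
    exact_mod_cast hx.succ_le_card_filter_le i
  · by_contra! hlt
    rw [Set.mem_ofPred_eq, cdf_empiricalMeasure hN] at ht
    have : (#{j | x j ≤ t} : ℝ) ≤ i := by exact_mod_cast hx.card_filter_le_le hlt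
    exact hω.1.not_ge (ht.trans (div_le_div_of_nonneg_right this hNR.le))

theorem intervalIntegrable_and_integral_eq_of_eqOn_Ioo {f : ℝ → ℝ} {a b c : ℝ} (hab : a ≤ b)
    (hf : Set.EqOn f (fun _ => c) (Set.Ioo a b)) :
    IntervalIntegrable f volume a b ∧ ∫ ω in a..b, f ω = (b - a) * c := by
  have hae : f =ᵐ[volume.restrict (Set.Ioc a b)] fun _ => c := by
    rw [← Measure.restrict_congr_set Ioo_ae_eq_Ioc]
    exact ae_restrict_of_forall_mem measurableSet_Ioo hf
  refine ⟨?_, ?_⟩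
  · rw [intervalIntegrable_iff_integrableOn_Ioc_of_le hab]
    exact (integrableOn_const measure_Ioc_lt_top.ne).congr hae.symm
  · rw [intervalIntegral.integral_of_le hab, integral_congr_ae hae, setIntegral_const,
      measureReal_def, Real.volume_Ioc, ENNReal.toReal_ofReal (sub_nonneg.2 hab), smul_eq_mul]

theorem setIntegral_Ioo_zero_one_eq_of_eqOn_uniform_pieces {N : ℕ} (hN : 0 < N) {f : ℝ → ℝ}
    (c : Fin N → ℝ)
    (hf : ∀ k : Fin N, Set.EqOn f (fun _ => c k) (Set.Ioo ((k : ℝ) / N) (((k : ℝ) + 1) / N))) :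
    ∫ ω in Set.Ioo (0 : ℝ) 1, f ω = (1 / N) * ∑ k, c k := by
  have hNR : (0 : ℝ) < N := by exact_mod_cast hN
  set a : ℕ → ℝ := fun k => k / N
  have hmono : ∀ k : ℕ, a k ≤ a (k + 1) := fun k => by
    simp only [a]; gcongr; exact_mod_cast k.le_succ
  have hpiece (k : Fin N) := intervalIntegrable_and_integral_eq_of_eqOn_Ioo (hmono k) (by
    simpa [a] using hf k)
  have hsplit := intervalIntegral.sum_integral_adjacent_intervals
    (a := a) (μ := volume) (f := f) (n := N) fun k hk => (hpiece ⟨k, hk⟩).1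
  have ha0 : a 0 = 0 := by simp [a]
  have haN : a N = 1 := div_self hNR.ne'
  rw [ha0, haN, ← Fin.sum_univ_eq_sum_range (fun k => ∫ ω in a k..a (k + 1), f ω)] at hsplit
  rw [← integral_Ioc_eq_integral_Ioo, ← intervalIntegral.integral_of_le zero_le_one, ← hsplit,
    mul_sum]
  refine sum_congr rfl fun k _ => ?_
  rw [(hpiece k).2]
  simp only [a]
  push_cast
  field_simp
  ring

/-- For sorted particle representations,
`W₁((1/N)Σ δ_{x_i}, (1/N)Σ δ_{y_i}) = (1/N)Σ |x_i − y_i|`. -/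
theorem wasserstein_sorted_particles
    (N : ℕ) (hN : 0 < N) (x y : Fin N → ℝ) (hx : Monotone x) (hy : Monotone y) :
    W1 (∑ i, ((N : ENNReal))⁻¹ • Measure.dirac (x i))
       (∑ i, ((N : ENNReal))⁻¹ • Measure.dirac (y i)) =
      (1 / (N : ℝ)) * ∑ i, |x i - y i| := by
  refine setIntegral_Ioo_zero_one_eq_of_eqOn_uniform_pieces hN _ fun k ω hω => ?_
  have hω' : ω ∈ Set.Ioc ((k : ℝ) / N) (((k : ℝ) + 1) / N) := Set.Ioo_subset_Ioc_self hω
  change |quantile (empiricalMeasure x) ω - quantile (empiricalMeasure y) ω| = _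
  rw [quantile_empiricalMeasure hN hx k hω', quantile_empiricalMeasure hN hy k hω']
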